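/- Let $(R,\mathfrak{m})$ be a two-dimensional regular local ring with regular system of parameters $x, y$, and let $0 < \alpha < \beta < n$ be integers with $\beta + 2 \leq 2\alpha$. Set $I = (x^3, x^2y^{\alpha}, xy^{\beta}, y^n)$. Then $x^2 y^{\alpha - 1}$ is integral over $I$ but $x^2y^{\alpha-1} \notin I$; in particular $I$ is not integrally closed. -/

import Mathlib

/-!
Integrality: `(x²y^(α-1))² = x³ · xy^β · y^(2α-2-β) ∈ I²`.

Non-membership: by Krull's height theorem `R ⧸ (x)` has positive dimension, and it is a Noetherian
local ring with principal maximal ideal `(y)`; by the Krull intersection theorem every nonzero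
element there is a unit times a power of `y`, so `y` is a nonzerodivisor on `R ⧸ (x)`, i.e. `x, y`
is a regular sequence. Writing `x²y^(α-1)` as a combination of the generators of `I` and cancelling
`x` twice modulo `y^β` gives `y^(α-1) ∈ (x, y^α)`, whence `y^(α-1)(1 - by) ∈ (x)` and
`1 - by ∈ (x) ⊆ 𝔪`, which is absurd.
-/

open Ideal IsLocalRing Submodule

/-- `z` is integral over the ideal `I`: it satisfies an equation
`z^k + c₁ z^(k-1) + ⋯ + c_k = 0` with `cᵢ ∈ Iⁱ`. -/
def IsIntegralOverIdeal {R : Type*} [CommRing R] (I : Ideal R) (z : R) : Prop :=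
  ∃ k : ℕ, 0 < k ∧ ∃ c : ℕ → R, (∀ i ∈ Finset.Icc 1 k, c i ∈ I ^ i) ∧
    z ^ k + ∑ i ∈ Finset.Icc 1 k, c i * z ^ (k - i) = 0

theorem isIntegralOverIdeal_of_pow_mem_pow {R : Type*} [CommRing R] {I : Ideal R} {z : R}
    {k : ℕ} (hk : 0 < k) (h : z ^ k ∈ I ^ k) : IsIntegralOverIdeal I z := by
  refine ⟨k, hk, fun i => if i = k then -z ^ k else 0, fun i _ => ?_, ?_⟩
  · dsimp only
    split_ifs with hi
    · subst hi; exact neg_mem h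
    · exact zero_mem _
  · rw [Finset.sum_eq_single_of_mem k (Finset.mem_Icc.mpr ⟨hk, le_rfl⟩)
      (fun i _ hi => by simp [hi])]
    simp

namespace IsLocalRing

variable {S : Type*} [CommRing S] [IsLocalRing S] {t : S}

theorem krullDimLE_zero_of_maximalIdeal_eq_span_singleton_of_pow_eq_zero
    (ht : maximalIdeal S = span {t}) {j : ℕ} (htj : t ^ j = 0) : Ring.KrullDimLE 0 S :=
  .mk₀ fun p hp => by
    have hle : maximalIdeal S ≤ p := ht ▸ Ideal.span_le.mpr
      (Set.singleton_subset_iff.mpr (hp.mem_of_pow_mem j (htj ▸ p.zero_mem)))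
    exact (maximalIdeal.isMaximal S).eq_of_le hp.ne_top hle ▸ maximalIdeal.isMaximal S

variable [IsNoetherianRing S]

theorem exists_eq_unit_mul_pow_of_maximalIdeal_eq_span_singleton
    (ht : maximalIdeal S = span {t}) {a : S} (ha : a ≠ 0) :
    ∃ (u : Sˣ) (j : ℕ), a = u * t ^ j := by
  classical
  have hex : ∃ j, a ∉ maximalIdeal S ^ j := by
    by_contra! h
    apply ha
    rw [← Ideal.mem_bot, ← iInf_pow_eq_bot_of_isLocalRing _ (maximalIdeal.isMaximal S).ne_top]
    exact mem_iInf _ |>.mpr h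
  obtain ⟨j, hj⟩ : ∃ j, Nat.find hex = j + 1 := Nat.exists_eq_add_one.mpr <|
    Nat.pos_of_ne_zero fun h0 => Nat.find_spec hex (by simp [h0])
  have hmem : a ∈ span {t ^ j} := by
    rw [← span_singleton_pow, ← ht]
    exact not_not.mp (Nat.find_min hex (by omega))
  obtain ⟨c, rfl⟩ := mem_span_singleton'.mp hmem
  have hc : IsUnit c := by
    by_contra hc
    obtain ⟨d, rfl⟩ := mem_span_singleton'.mp (ht ▸ (mem_maximalIdeal c).mpr hc)
    apply Nat.find_spec hex
    rw [hj, ht, span_singleton_pow]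
    exact mem_span_singleton'.mpr ⟨d, by ring⟩
  exact ⟨hc.unit, j, rfl⟩

theorem mem_nonZeroDivisors_of_maximalIdeal_eq_span_singleton
    (ht : maximalIdeal S = span {t}) (hdim : 0 < ringKrullDim S) : t ∈ nonZeroDivisors S := by
  refine mem_nonZeroDivisors_iff_right.mpr fun a hat => ?_
  by_contra ha
  obtain ⟨u, j, rfl⟩ := exists_eq_unit_mul_pow_of_maximalIdeal_eq_span_singleton ht ha
  have htj : t ^ (j + 1) = 0 := by
    rw [← u.isUnit.mul_right_eq_zero, pow_succ, ← mul_assoc, hat]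
  have := krullDimLE_zero_of_maximalIdeal_eq_span_singleton_of_pow_eq_zero ht htj
  exact hdim.ne' (ringKrullDimZero_iff_ringKrullDim_eq_zero.mp this)

end IsLocalRing

section MaximalIdealEqSpanPair

variable {R : Type*} [CommRing R] [IsLocalRing R] [IsNoetherianRing R] {x y : R}

theorem ne_zero_of_maximalIdeal_eq_span_pair (hm : maximalIdeal R = span {x, y})
    (hdim : 1 < ringKrullDim R) : x ≠ 0 := by
  rintro rfl
  rw [Ideal.span_insert_zero] at hm
  have hy : ¬ IsUnit y := (mem_maximalIdeal y).mp (hm ▸ Ideal.mem_span_singleton_self y)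
  refine hdim.not_ge ?_
  rw [← maximalIdeal_height_eq_ringKrullDim, hm]
  exact_mod_cast height_span_singleton_le_one hy

theorem mk_mem_nonZeroDivisors_of_maximalIdeal_eq_span_pair
    (hm : maximalIdeal R = span {x, y}) (hdim : 1 < ringKrullDim R) :
    Ideal.Quotient.mk (span {x}) y ∈ nonZeroDivisors (R ⧸ span {x}) := by
  have hx : x ∈ maximalIdeal R := hm ▸ Ideal.subset_span (Set.mem_insert x {y})
  have : Nontrivial (R ⧸ span {x}) := Ideal.Quotient.nontrivial_iff.mpr <|
    ne_top_of_le_ne_top (maximalIdeal.isMaximal R).ne_top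
      ((Ideal.span_singleton_le_iff_mem _).mpr hx)
  have : IsLocalRing (R ⧸ span {x}) := .of_surjective' _ Ideal.Quotient.mk_surjective
  refine mem_nonZeroDivisors_of_maximalIdeal_eq_span_singleton ?_ ?_
  · rw [← map_maximalIdeal_of_surjective _ Ideal.Quotient.mk_surjective, hm, Ideal.map_span,
      Set.image_pair, Ideal.Quotient.eq_zero_iff_mem.mpr (Ideal.mem_span_singleton_self x),
      Ideal.span_insert_zero]
  · have := height_le_ringKrullDim_quotient_add_one (p := maximalIdeal R) hx
    rw [maximalIdeal_height_eq_ringKrullDim] at this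
    by_contra! h
    exact (hdim.trans_le this).not_ge (by simpa using add_le_add_left h 1)

theorem mem_span_singleton_of_pow_mul_mem_of_maximalIdeal_eq_span_pair
    (hm : maximalIdeal R = span {x, y}) (hdim : 1 < ringKrullDim R) {k : ℕ} {a : R}
    (h : y ^ k * a ∈ span {x}) : a ∈ span {x} := by
  rw [← Ideal.Quotient.eq_zero_iff_mem, map_mul, map_pow] at h
  rw [← Ideal.Quotient.eq_zero_iff_mem]
  exact (mem_nonZeroDivisors_iff.mp
    (pow_mem (mk_mem_nonZeroDivisors_of_maximalIdeal_eq_span_pair hm hdim) k)).1 _ h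

theorem pow_notMem_span_pair_of_maximalIdeal_eq_span_pair
    (hm : maximalIdeal R = span {x, y}) (hdim : 1 < ringKrullDim R) (k : ℕ) :
    y ^ k ∉ span {x, y ^ (k + 1)} := by
  intro h
  obtain ⟨a, b, hab⟩ := Ideal.mem_span_pair.mp h
  have hx : x ∈ maximalIdeal R := hm ▸ Ideal.subset_span (Set.mem_insert x {y})
  have hy : y ∈ maximalIdeal R := hm ▸ Ideal.subset_span (Set.mem_insert_of_mem x rfl)
  have hxby : 1 - b * y ∈ span {x} :=
    mem_span_singleton_of_pow_mul_mem_of_maximalIdeal_eq_span_pair hm hdim (k := k)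
      (mem_span_singleton'.mpr ⟨a, by linear_combination hab⟩)
  refine (maximalIdeal.isMaximal R).ne_top ((eq_top_iff_one _).mpr ?_)
  simpa using add_mem ((Ideal.span_singleton_le_iff_mem _).mpr hx hxby) (mul_mem_left _ b hy)

variable [IsDomain R]

theorem mem_span_pow_of_mul_mem_of_maximalIdeal_eq_span_pair
    (hm : maximalIdeal R = span {x, y}) (hdim : 1 < ringKrullDim R) {k : ℕ} {c : R}
    (h : x * c ∈ span {y ^ k}) : c ∈ span {y ^ k} := by
  obtain ⟨d, hd⟩ := mem_span_singleton'.mp h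
  have hdx : d ∈ span {x} :=
    mem_span_singleton_of_pow_mul_mem_of_maximalIdeal_eq_span_pair hm hdim (k := k)
      (mem_span_singleton'.mpr ⟨c, by linear_combination -hd⟩)
  obtain ⟨e, rfl⟩ := mem_span_singleton'.mp hdx
  refine mem_span_singleton'.mpr ⟨e, mul_left_cancel₀
    (ne_zero_of_maximalIdeal_eq_span_pair hm hdim) ?_⟩
  rw [← hd]; ring

theorem pow_two_mul_pow_notMem_of_maximalIdeal_eq_span_pair
    (hm : maximalIdeal R = span {x, y}) (hdim : 1 < ringKrullDim R) {k β n : ℕ}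
    (hkβ : k < β) (hβn : β ≤ n) :
    x ^ 2 * y ^ k ∉ span {x ^ 3, x ^ 2 * y ^ (k + 1), x * y ^ β, y ^ n} := by
  intro hz
  simp only [Ideal.mem_span_insert, mem_span_singleton'] at hz
  obtain ⟨a, _, ⟨b, _, ⟨c, _, ⟨d, rfl⟩, rfl⟩, rfl⟩, hz⟩ := hz
  have hn : y ^ n = y ^ β * y ^ (n - β) := by rw [← pow_add, Nat.add_sub_cancel' hβn]
  have hβ : y ^ β = y ^ (k + 1) * y ^ (β - (k + 1)) := by
    rw [← pow_add, Nat.add_sub_cancel' hkβ]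
  have hxx : x * (x * (y ^ k - a * x - b * y ^ (k + 1))) ∈ span {y ^ β} :=
    mem_span_singleton'.mpr ⟨c * x + d * y ^ (n - β), by linear_combination -hz - d * hn⟩
  obtain ⟨e, he⟩ := mem_span_singleton'.mp <|
    mem_span_pow_of_mul_mem_of_maximalIdeal_eq_span_pair hm hdim <|
      mem_span_pow_of_mul_mem_of_maximalIdeal_eq_span_pair hm hdim hxx
  exact pow_notMem_span_pair_of_maximalIdeal_eq_span_pair hm hdim k <| Ideal.mem_span_pair.mpr
    ⟨a, b + e * y ^ (β - (k + 1)), by linear_combination he - e * hβ⟩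

end MaximalIdealEqSpanPair

theorem not_integrally_closed_general {R : Type*} [CommRing R] [IsDomain R] [IsNoetherianRing R]
    [IsLocalRing R] (x y : R) (hm : maximalIdeal R = Ideal.span {x, y})
    (hdim : ringKrullDim R = 2)
    (α β n : ℕ) (hαβ : α < β) (hβn : β < n) (hβα : β + 2 ≤ 2 * α)
    (I : Ideal R)
    (hI : I = Ideal.span {x ^ 3, x ^ 2 * y ^ α, x * y ^ β, y ^ n}) :
    IsIntegralOverIdeal I (x ^ 2 * y ^ (α - 1)) ∧ x ^ 2 * y ^ (α - 1) ∉ I := by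
  obtain ⟨k, rfl⟩ : ∃ k, α = k + 1 := ⟨α - 1, by omega⟩
  rw [Nat.add_sub_cancel]
  obtain ⟨l, hl⟩ : ∃ l, k + k = β + l := ⟨k + k - β, by omega⟩
  have hx3 : x ^ 3 ∈ I := hI ▸ Ideal.subset_span (by simp)
  have hxyβ : x * y ^ β ∈ I := hI ▸ Ideal.subset_span (by simp)
  constructor
  · refine isIntegralOverIdeal_of_pow_mem_pow two_pos ?_
    have hsq : (x ^ 2 * y ^ k) ^ 2 = x ^ 3 * (x * y ^ β) * y ^ l := by
      rw [show (x ^ 2 * y ^ k) ^ 2 = x ^ 4 * y ^ (k + k) by ring, hl]; ring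
    rw [hsq, pow_two]
    exact mul_mem_right _ _ (Ideal.mul_mem_mul hx3 hxyβ)
  · rw [hI]
    exact pow_two_mul_pow_notMem_of_maximalIdeal_eq_span_pair hm (by rw [hdim]; norm_num)
      (by omega) hβn.le

/-- For `0 < α < β < n` with `β + 2 ≤ 2α` and `I = (x³, x²yᵅ, xyᵝ, yⁿ)`:
`x²y^(α-1)` is integral over `I` but not in `I`; in particular `I` is not
integrally closed. -/
theorem not_integrally_closed {R : Type*} [CommRing R] [IsDomain R] [IsNoetherianRing R]
    [IsLocalRing R] (x y : R) (hm : maximalIdeal R = Ideal.span {x, y})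
    (hdim : ringKrullDim R = 2)
    (α β n : ℕ) (hα : 0 < α) (hαβ : α < β) (hβn : β < n) (hβα : β + 2 ≤ 2 * α)
    (I : Ideal R)
    (hI : I = Ideal.span {x ^ 3, x ^ 2 * y ^ α, x * y ^ β, y ^ n}) :
    IsIntegralOverIdeal I (x ^ 2 * y ^ (α - 1)) ∧ x ^ 2 * y ^ (α - 1) ∉ I :=
  not_integrally_closed_general x y hm hdim α β n hαβ hβn hβα I hI
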